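/- arXiv:1109.2158 — 8 statements merged into one kernel-verified Lean document; each statement's English description precedes it below -/
import Mathlib

section
/- Let (A_i) be a decreasing sequence of nonempty compact sets in ℝ² (A_0 ⊇ A_1 ⊇ ...) and let (λ_i) be a monotonically decreasing sequence of positive reals converging to λ > 0. Then offset(⋂_i A_i, λ) = ⋂_i offset(A_i, λ_i). -/
open Pointwise

abbrev Pl := EuclideanSpace ℝ (Fin 2)

def offset (X : Set Pl) (r : ℝ) : Set Pl := X + Metric.closedBall (0 : Pl) r

def inset (X : Set Pl) (r : ℝ) : Set Pl := {x | Metric.closedBall x r ⊆ X}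

theorem stmt_6 (A : ℕ → Set Pl) (hA : ∀ i, IsCompact (A i)) (hne : ∀ i, (A i).Nonempty)
    (hdec : ∀ i, A (i + 1) ⊆ A i)
    (l : ℕ → ℝ) (lam : ℝ) (hlam : 0 < lam)
    (hmono : ∀ i, l (i + 1) ≤ l i) (hlim : Filter.Tendsto l Filter.atTop (nhds lam)) :
    offset (⋂ i, A i) lam = ⋂ i, offset (A i) (l i) := by
  have hant : Antitone l := antitone_nat_of_succ_le hmono
  have hge : ∀ i, lam ≤ l i := fun i =>
    le_of_tendsto hlim (Filter.eventually_atTop.2 ⟨i, fun j hj => hant hj⟩)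
  ext x
  simp only [offset, Set.mem_add, Set.mem_iInter, Metric.mem_closedBall]
  constructor
  · rintro ⟨a, ha, b, hb, rfl⟩ i
    exact ⟨a, ha i, b, le_trans hb (hge i), rfl⟩
  · intro h
    set B : ℕ → Set Pl := fun i => A i ∩ Metric.closedBall x (l i) with hB
    have hBne : ∀ i, (B i).Nonempty := by
      intro i
      obtain ⟨a, ha, b, hb, hab⟩ := h i
      refine ⟨a, ha, ?_⟩
      simp only [Metric.mem_closedBall]
      rw [dist_comm, ← hab]
      simpa using hb
    have hBdec : ∀ i, B (i + 1) ⊆ B i := fun i =>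
      Set.inter_subset_inter (hdec i) (Metric.closedBall_subset_closedBall (hmono i))
    have hBcl : ∀ i, IsClosed (B i) := fun i =>
      ((hA i).isClosed).inter Metric.isClosed_closedBall
    have hBc : IsCompact (B 0) := (hA 0).inter_right Metric.isClosed_closedBall
    obtain ⟨a, ha⟩ := IsCompact.nonempty_iInter_of_sequence_nonempty_isCompact_isClosed
      B hBdec hBne hBc hBcl
    simp only [Set.mem_iInter, hB, Set.mem_inter_iff, Metric.mem_closedBall] at ha
    have hax : dist a x ≤ lam :=
      ge_of_tendsto hlim (Filter.Eventually.of_forall fun i => (ha i).2)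
    refine ⟨a, fun i => (ha i).1, x - a, ?_, by abel⟩
    simpa [dist_eq_norm, norm_sub_rev] using hax
end

section
/- Let Q be a nonempty compact subset of ℝ², let r > 0, ε ≥ 0, and set Π := inset(offset(Q,ε), r). Then for any compact set P: H(offset(P,r), Q) ≤ ε if and only if P ⊆ Π and Q ⊆ offset(P, r+ε). -/
open Pointwise

lemma mem_cth_iff {s : Set Pl} (hs : s.Nonempty) {δ : ℝ} (hδ : 0 ≤ δ) {x : Pl} :
    x ∈ Metric.cthickening δ s ↔ Metric.infDist x s ≤ δ := by
  rw [Metric.mem_cthickening_iff,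
    ENNReal.le_ofReal_iff_toReal_le (Metric.infEdist_ne_top hs) hδ]
  rfl

lemma haus_le_iff {A Q : Set Pl} (hA : IsCompact A) (hAne : A.Nonempty)
    (hQ : IsCompact Q) (hQne : Q.Nonempty) {ε : ℝ} (hε : 0 ≤ ε) :
    Metric.hausdorffDist A Q ≤ ε ↔
      A ⊆ Metric.cthickening ε Q ∧ Q ⊆ Metric.cthickening ε A := by
  have fin : EMetric.hausdorffEdist A Q ≠ ⊤ :=
    Metric.hausdorffEdist_ne_top_of_nonempty_of_bounded hAne hQne hA.isBounded hQ.isBounded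
  constructor
  · intro h
    refine ⟨fun x hx => (mem_cth_iff hQne hε).2
      ((Metric.infDist_le_hausdorffDist_of_mem hx fin).trans h), fun y hy =>
      (mem_cth_iff hAne hε).2 ?_⟩
    have := Metric.infDist_le_hausdorffDist_of_mem hy
      (by rw [EMetric.hausdorffEdist_comm]; exact fin)
    rw [Metric.hausdorffDist_comm] at this
    exact this.trans h
  · rintro ⟨h1, h2⟩
    exact Metric.hausdorffDist_le_of_infDist hε
      (fun x hx => (mem_cth_iff hQne hε).1 (h1 hx))
      (fun y hy => (mem_cth_iff hAne hε).1 (h2 hy))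

theorem stmt_9 (Q : Set Pl) (hQ : IsCompact Q) (hQne : Q.Nonempty)
    (r ε : ℝ) (hr : 0 < r) (hε : 0 ≤ ε)
    (P : Set Pl) (hP : IsCompact P) (hPne : P.Nonempty) :
    Metric.hausdorffDist (offset P r) Q ≤ ε ↔
      P ⊆ inset (offset Q ε) r ∧ Q ⊆ offset P (r + ε) := by
  have hBeq : offset P r = Metric.cthickening r P := hP.add_closedBall_zero hr.le
  have hQeq : offset Q ε = Metric.cthickening ε Q := hQ.add_closedBall_zero hε
  have hB : IsCompact (offset P r) := hP.add (isCompact_closedBall 0 r)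
  have hBne : (offset P r).Nonempty := hPne.add ⟨0, Metric.mem_closedBall_self hr.le⟩
  rw [haus_le_iff hB hBne hQ hQne hε]
  have e1 : offset P r ⊆ Metric.cthickening ε Q ↔ P ⊆ inset (offset Q ε) r := by
    rw [← hQeq, hBeq, hP.cthickening_eq_biUnion_closedBall hr.le, Set.iUnion₂_subset_iff]
    exact Iff.rfl
  have e2 : Metric.cthickening ε (offset P r) = offset P (r + ε) := by
    rw [hBeq, cthickening_cthickening hε hr.le, add_comm ε r,
      ← hP.add_closedBall_zero (by linarith : (0:ℝ) ≤ r + ε)]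
    rfl
  rw [e1, e2]
end

section
/- Let Q be a nonempty compact set, r > 0, ε ≥ 0, Π := inset(offset(Q,ε), r) assumed nonempty. If Q ⊆ offset(Π, r+ε), then H(offset(Π, r), Q) ≤ ε; i.e., Π itself is a solution to the deconstruction problem whenever any solution exists. -/
open Pointwise

theorem stmt_10 (Q : Set Pl) (hQ : IsCompact Q) (hQne : Q.Nonempty)
    (r ε : ℝ) (hr : 0 < r) (hε : 0 ≤ ε)
    (hne : (inset (offset Q ε) r).Nonempty)
    (h : Q ⊆ offset (inset (offset Q ε) r) (r + ε)) :
    Metric.hausdorffDist (offset (inset (offset Q ε) r) r) Q ≤ ε := by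
  apply Metric.hausdorffDist_le_of_infDist hε
  · -- every point of offset(Π, r) is within ε of Q
    rintro x hx
    obtain ⟨p, hp, b, hb, rfl⟩ := hx
    have hxball : p + b ∈ Metric.closedBall p r := by
      simp only [Metric.mem_closedBall] at hb ⊢
      simpa [dist_eq_norm] using hb
    have hxQ : p + b ∈ offset Q ε := hp hxball
    obtain ⟨q, hq, c, hc, heq⟩ := hxQ
    have : dist (p + b) q ≤ ε := by
      rw [← heq]
      simp only [Metric.mem_closedBall] at hc
      simpa [dist_eq_norm] using hc
    exact le_trans (Metric.infDist_le_dist_of_mem hq) this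
  · -- every point of Q is within ε of offset(Π, r)
    rintro q hq
    obtain ⟨p, hp, v, hv, rfl⟩ := h hq
    simp only [Metric.mem_closedBall, dist_zero_right] at hv
    by_cases hvr : ‖v‖ ≤ r
    · have : p + v ∈ offset (inset (offset Q ε) r) r :=
        ⟨p, hp, v, by simpa [Metric.mem_closedBall, dist_eq_norm] using hvr, rfl⟩
      calc Metric.infDist (p + v) (offset (inset (offset Q ε) r) r) ≤ 0 := by
            simpa using Metric.infDist_le_dist_of_mem (x := p + v) this
        _ ≤ ε := hε
    · push_neg at hvr
      have hv0 : 0 < ‖v‖ := lt_trans hr hvr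
      set w : Pl := (r / ‖v‖) • v with hw
      have hwnorm : ‖w‖ = r := by
        rw [hw, norm_smul, Real.norm_eq_abs, abs_of_pos (div_pos hr hv0)]
        field_simp
      have hmem : p + w ∈ offset (inset (offset Q ε) r) r :=
        ⟨p, hp, w, by simp [Metric.mem_closedBall, dist_eq_norm, hwnorm], rfl⟩
      have hdist : dist (p + v) (p + w) ≤ ε := by
        have : ‖v - w‖ = ‖v‖ - r := by
          rw [hw]
          have : v - (r / ‖v‖) • v = (1 - r / ‖v‖) • v := by
            rw [sub_smul, one_smul]
          rw [this, norm_smul, Real.norm_eq_abs,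
            abs_of_nonneg (by rw [sub_nonneg]; exact (div_le_one hv0).mpr hvr.le)]
          field_simp
        rw [dist_eq_norm]
        have h2 : p + v - (p + w) = v - w := by abel
        rw [h2, this]
        linarith
      exact le_trans (Metric.infDist_le_dist_of_mem hmem) hdist
end

section
/- Monotonicity of the critical tolerance in the radius: for a fixed nonempty compact Q ⊆ ℝ² and 0 < a < b, define ε̂(r) := inf{ε ≥ 0 : ∃ compact P with H(offset(P,r), Q) ≤ ε}. Then ε̂(a) ≤ ε̂(b). -/
open Pointwise

noncomputable def epsHat (Q : Set Pl) (r : ℝ) : ℝ :=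
  sInf {ε : ℝ | 0 ≤ ε ∧ ∃ P : Set Pl, IsCompact P ∧ P.Nonempty ∧
    Metric.hausdorffDist (offset P r) Q ≤ ε}

theorem stmt_11 (Q : Set Pl) (hQ : IsCompact Q) (hQne : Q.Nonempty)
    (a b : ℝ) (ha : 0 < a) (hab : a < b) :
    epsHat Q a ≤ epsHat Q b := by
  apply csInf_le_csInf
  · exact ⟨0, fun x hx => hx.1⟩
  · -- nonempty: take P = Q at radius b with ε = the hausdorff distance
    refine ⟨max 0 (Metric.hausdorffDist (offset Q b) Q), le_max_left _ _, Q, hQ, hQne,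
      le_max_right _ _⟩
  · rintro ε ⟨hε, P, hP, hPne, hdist⟩
    refine ⟨hε, offset P (b - a), hP.add (ProperSpace.isCompact_closedBall _ _),
      hPne.add ⟨0, Metric.mem_closedBall_self (by linarith)⟩, ?_⟩
    have : offset (offset P (b - a)) a = offset P b := by
      simp only [offset, add_assoc,
        closedBall_add_closedBall (by linarith : (0:ℝ) ≤ b - a) ha.le]
      norm_num
    rw [this]; exact hdist
end

section
/- The infimum tolerance is attained: for nonempty compact Q ⊆ ℝ² and r > 0, there exists a compact set P with H(offset(P,r), Q) = ε̂, where ε̂ := inf{ε : ∃ compact P' with H(offset(P',r), Q) ≤ ε}. In particular the infimum in the definition of ε̂ is a minimum. -/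
open Pointwise

open Metric EMetric Set TopologicalSpace

-- Minkowski sum with a fixed set is 1-Lipschitz for Hausdorff edistance
lemma offset_hausdorffEdist_le (A B : Set Pl) (r : ℝ) :
    hausdorffEdist (offset A r) (offset B r) ≤ hausdorffEdist A B := by
  have key : ∀ (S T : Set Pl), ∀ x ∈ offset S r,
      infEdist x (offset T r) ≤ hausdorffEdist S T := by
    intro S T x hx
    obtain ⟨a, ha, d, hd, rfl⟩ := hx
    have h1 : infEdist (a + d) (offset T r) ≤ infEdist a T := by
      rw [infEdist, le_infEdist]
      intro b hb
      have : b + d ∈ offset T r := Set.add_mem_add hb hd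
      calc infEdist (a + d) (offset T r) ≤ edist (a + d) (b + d) :=
            infEdist_le_edist_of_mem this
        _ = edist a b := by rw [edist_add_right]
    exact h1.trans (infEdist_le_hausdorffEdist_of_mem ha)
  apply hausdorffEdist_le_of_infEdist
  · exact key A B
  · intro y hy
    rw [hausdorffEdist, hausdorffEdist_comm]
    exact key B A y hy

theorem stmt_12 (Q : Set Pl) (hQ : IsCompact Q) (hQne : Q.Nonempty) (r : ℝ) (hr : 0 < r) :
    ∃ P : Set Pl, IsCompact P ∧ P.Nonempty ∧
      Metric.hausdorffDist (offset P r) Q =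
        sInf {ε : ℝ | 0 ≤ ε ∧ ∃ P' : Set Pl, IsCompact P' ∧ P'.Nonempty ∧
          Metric.hausdorffDist (offset P' r) Q ≤ ε} := by
  have hr0 : (0:ℝ) ≤ r := hr.le
  set S := {ε : ℝ | 0 ≤ ε ∧ ∃ P' : Set Pl, IsCompact P' ∧ P'.Nonempty ∧
      Metric.hausdorffDist (offset P' r) Q ≤ ε} with hS
  -- basic facts about offsets
  have hball : (Metric.closedBall (0 : Pl) r).Nonempty := ⟨0, by simp [hr0]⟩
  have hoff_ne : ∀ (A : Set Pl), A.Nonempty → (offset A r).Nonempty :=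
    fun A hA => hA.add hball
  have hoff_cpt : ∀ (A : Set Pl), IsCompact A → IsCompact (offset A r) :=
    fun A hA => hA.add (isCompact_closedBall _ _)
  have hsub : ∀ (A : Set Pl), A ⊆ offset A r := by
    intro A a ha
    exact ⟨a, ha, 0, by simp [hr0], by simp⟩
  -- hausdorffEdist finiteness helper
  have hfin : ∀ (A B : Set Pl), IsCompact A → A.Nonempty → IsCompact B → B.Nonempty →
      hausdorffEdist A B ≠ ⊤ := fun A B hA hAne hB hBne =>
    hausdorffEdist_ne_top_of_nonempty_of_bounded hAne hBne hA.isBounded hB.isBounded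
  -- with P' = Q we get H(offset Q r, Q) ≤ r
  have hQr : Metric.hausdorffDist (offset Q r) Q ≤ r := by
    apply hausdorffDist_le_of_mem_dist hr0
    · rintro x ⟨q, hq, d, hd, rfl⟩
      refine ⟨q, hq, ?_⟩
      have : dist (q + d) q = ‖d‖ := by
        simp [dist_eq_norm]
      rw [this]
      simpa [Metric.mem_closedBall, dist_eq_norm] using hd
    · intro q hq
      exact ⟨q, hsub Q hq, by simp [hr0]⟩
  have hrS : r ∈ S := ⟨hr0, Q, hQ, hQne, hQr⟩
  have hSne : S.Nonempty := ⟨r, hrS⟩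
  have hSbdd : BddBelow S := ⟨0, fun ε hε => hε.1⟩
  -- the big compact container
  set K : Set Pl := offset Q (2 * r) with hK
  have hKcpt : IsCompact K := hQ.add (isCompact_closedBall _ _)
  have hKne : K.Nonempty := hQne.add ⟨0, by simp; positivity⟩
  -- any compact P' with small Hausdorff distance is inside K
  have hPK : ∀ (P' : Set Pl), IsCompact P' → P'.Nonempty →
      Metric.hausdorffDist (offset P' r) Q ≤ r → P' ⊆ K := by
    intro P' hP' hP'ne hH p hp
    have hfin' := hfin (offset P' r) Q (hoff_cpt P' hP') (hoff_ne P' hP'ne) hQ hQne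
    have h1 : Metric.infDist p Q ≤ r :=
      le_trans (infDist_le_hausdorffDist_of_mem (hsub P' hp) hfin') hH
    obtain ⟨q, hq, hdq⟩ := hQ.exists_infDist_eq_dist hQne p
    refine ⟨q, hq, p - q, ?_, by module⟩
    have : dist p q ≤ 2 * r := by rw [← hdq]; linarith
    simpa [Metric.mem_closedBall, dist_eq_norm, dist_comm p q, norm_sub_rev] using this
  -- the objective function
  set f : NonemptyCompacts Pl → ℝ :=
    fun P => Metric.hausdorffDist (offset (P : Set Pl) r) Q with hf
  -- f is 1-Lipschitz, hence continuous
  have hlip : ∀ A B : NonemptyCompacts Pl, f A ≤ f B + dist A B := by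
    intro A B
    have hfinAB : hausdorffEdist ((A : Set Pl)) (B : Set Pl) ≠ ⊤ :=
      hfin _ _ A.isCompact A.nonempty B.isCompact B.nonempty
    have hoffAB : hausdorffEdist (offset (A : Set Pl) r) (offset (B : Set Pl) r) ≠ ⊤ :=
      ne_top_of_le_ne_top hfinAB (offset_hausdorffEdist_le _ _ r)
    have htri : f A ≤ Metric.hausdorffDist (offset (A : Set Pl) r) (offset (B : Set Pl) r)
        + f B := hausdorffDist_triangle hoffAB
    have h2 : Metric.hausdorffDist (offset (A : Set Pl) r) (offset (B : Set Pl) r)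
        ≤ dist A B := by
      rw [NonemptyCompacts.dist_eq]
      exact ENNReal.toReal_mono hfinAB (offset_hausdorffEdist_le _ _ r)
    linarith
  have hcont : Continuous f := by
    refine LipschitzWith.continuous (LipschitzWith.of_dist_le' (K := 1) ?_)
    intro A B
    rw [one_mul, Real.dist_eq, abs_le]
    constructor
    · have := hlip B A
      rw [dist_comm] at this
      linarith
    · have := hlip A B
      linarith
  -- the compact family of candidates : nonempty compact subsets of K
  haveI : CompactSpace K := isCompact_iff_compactSpace.mp hKcpt
  set L : NonemptyCompacts K → NonemptyCompacts Pl :=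
    fun A => ⟨⟨Subtype.val '' (A : Set K), A.isCompact.image continuous_subtype_val⟩,
      A.nonempty.image _⟩ with hL
  have hLiso : Isometry L := by
    intro A B
    have h1 : edist (L A) (L B)
        = hausdorffEdist (Subtype.val '' (A : Set K)) (Subtype.val '' (B : Set K)) := rfl
    have h2 : edist A B = hausdorffEdist ((A : Set K)) (B : Set K) := rfl
    rw [h1, h2, hausdorffEdist, EMetric.hausdorffEdist_image isometry_subtype_coe]
  have hrange : IsCompact (Set.range L) := isCompact_range hLiso.continuous
  -- Q itself lies in K, giving nonemptiness of the range
  have hQK : Q ⊆ K := by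
    intro q hq
    exact ⟨q, hq, 0, by simp; positivity, by simp⟩
  have hlift : ∀ T : Set Pl, IsCompact T → T.Nonempty → T ⊆ K →
      ∃ A : NonemptyCompacts K, ((L A : NonemptyCompacts Pl) : Set Pl) = T := by
    intro T hT hTne hTK
    have hcl : IsClosed (Subtype.val ⁻¹' T : Set K) :=
      hT.isClosed.preimage continuous_subtype_val
    obtain ⟨t, ht⟩ := hTne
    refine ⟨⟨⟨Subtype.val ⁻¹' T, hcl.isCompact⟩, ⟨⟨t, hTK ht⟩, ht⟩⟩, ?_⟩
    show Subtype.val '' (Subtype.val ⁻¹' T : Set K) = T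
    rw [Set.image_preimage_eq_iff.mpr]
    rw [Subtype.range_val]; exact hTK
  have hrange_ne : (Set.range L).Nonempty := by
    obtain ⟨A, -⟩ := hlift Q hQ hQne hQK
    exact ⟨L A, Set.mem_range_self _⟩
  obtain ⟨P₀, hP₀mem, hP₀min⟩ := hrange.exists_isMinOn hrange_ne hcont.continuousOn
  refine ⟨(P₀ : Set Pl), P₀.isCompact, P₀.nonempty, le_antisymm ?_ ?_⟩
  · -- f P₀ ≤ sInf S
    apply le_csInf hSne
    intro ε hε
    obtain ⟨hε0, P', hP', hP'ne, hH⟩ := hε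
    by_cases hcase : ε ≤ r
    · -- P' ⊆ K, so its lift is in range L
      have hP'K : P' ⊆ K := hPK P' hP' hP'ne (hH.trans hcase)
      obtain ⟨A, himg⟩ := hlift P' hP' hP'ne hP'K
      have h1 : f P₀ ≤ f (L A) := hP₀min (Set.mem_range_self A)
      have h2 : f (L A) = Metric.hausdorffDist (offset P' r) Q := by
        simp only [hf]; rw [himg]
      exact (h1.trans_eq h2).trans hH
    · -- ε > r : use that f P₀ ≤ f (lift of Q) ≤ r < ε
      push_neg at hcase
      obtain ⟨A, hAeq⟩ := hlift Q hQ hQne hQK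
      have h1 : f P₀ ≤ f (L A) := hP₀min (Set.mem_range_self A)
      have h2 : f (L A) = Metric.hausdorffDist (offset Q r) Q := by
        simp only [hf]; rw [hAeq]
      have : f P₀ ≤ r := (h1.trans_eq h2).trans hQr
      have hgoal : f P₀ ≤ ε := by linarith
      exact hgoal
  · -- sInf S ≤ f P₀ since f P₀ ∈ S
    exact csInf_le hSbdd ⟨hausdorffDist_nonneg, (P₀ : Set Pl), P₀.isCompact, P₀.nonempty,
      le_refl _⟩
end

section
/- Let x₁, x₂ be two points on a circle of radius r₁ such that the arc between them spans at most a quarter of the circle. Then the union of the closed disks of radius r₁ centered at x₁ and x₂ covers the 'extended linear cap': the quadrilateral region bounded by the two tangent lines to the circle at x₁ and x₂ and the two radii (normals) at x₁ and x₂. -/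
set_option maxHeartbeats 1000000


/-- Key lemma: a convex combination whose `x₁`-coefficient dominates the
`x₂`-coefficient lies in the ball around `x₁`. -/
lemma key_lemma (r g L : ℝ) (hr : 0 < r) (hg : 0 ≤ g) (hg' : g < r ^ 2)
    (hL : L * (r ^ 2 + g) = r ^ 2)
    (c x₁ x₂ T p : Pl)
    (hu : ‖x₁ - c‖ = r) (hv : ‖x₂ - c‖ = r)
    (hg2 : (inner ℝ (x₁ - c) (x₂ - c) : ℝ) = g)
    (hw : T - c = L • ((x₁ - c) + (x₂ - c)))
    (α β γ δ : ℝ) (hα : 0 ≤ α) (hβ : 0 ≤ β) (hγ : 0 ≤ γ) (hδ : 0 ≤ δ)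
    (hsum : α + β + γ + δ = 1) (hβδ : δ ≤ β)
    (hp : p = α • c + β • x₁ + γ • T + δ • x₂) :
    dist p x₁ ≤ r := by
  have hr2 : (0:ℝ) < r ^ 2 := by positivity
  have hs : (0:ℝ) < r ^ 2 + g := by linarith
  have hL1 : L ≤ 1 := by nlinarith
  have hL0 : 0 ≤ L := by nlinarith
  have hT : T = c + L • ((x₁ - c) + (x₂ - c)) := by
    rw [← hw]; abel
  -- bound on the tangent point
  have hTx : ‖T - x₁‖ ≤ r := by
    have e1 : T - x₁ = L • ((x₁ - c) + (x₂ - c)) - (x₁ - c) := by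
      rw [hT]; abel
    have e2 : ‖T - x₁‖ ^ 2 = L ^ 2 * (r ^ 2 + 2 * g + r ^ 2)
        - 2 * (L * (r ^ 2 + g)) + r ^ 2 := by
      rw [e1, norm_sub_sq_real, norm_smul, real_inner_smul_left, inner_add_left,
        real_inner_self_eq_norm_sq, real_inner_comm (x₁ - c) (x₂ - c), mul_pow,
        norm_add_sq_real, hg2, hu, hv]
      simp only [Real.norm_eq_abs, sq_abs]
    have e3 : ‖T - x₁‖ ^ 2 ≤ r ^ 2 := by
      rw [e2, hL]; nlinarith
    nlinarith [norm_nonneg (T - x₁)]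
  set t : ℝ := γ + δ * (r ^ 2 + g) / r ^ 2 with ht
  set a : ℝ := 1 - (β - δ) - t with ha
  have ht0 : 0 ≤ t := by
    have h0 : 0 ≤ δ * (r ^ 2 + g) / r ^ 2 := by positivity
    simp only [ht]; linarith
  have hμ : δ * (r ^ 2 + g) / r ^ 2 ≤ 2 * δ := by
    rw [div_le_iff₀ hr2]; nlinarith
  have ha0 : 0 ≤ a := by
    simp only [ha, ht]; linarith
  have hat : a + t ≤ 1 := by simp only [ha]; linarith
  have hdecomp : p - x₁ = a • (c - x₁) + t • (T - x₁) := by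
    have hα' : α = 1 - β - γ - δ := by linarith
    rw [hp, hα', hT, ha, ht]
    match_scalars
    · field_simp
      linear_combination 2 * δ * hL
    · field_simp
      linear_combination (-δ) * hL
    · field_simp
      linear_combination (-δ) * hL
  have : dist p x₁ = ‖p - x₁‖ := dist_eq_norm p x₁
  rw [this, hdecomp]
  calc ‖a • (c - x₁) + t • (T - x₁)‖ ≤ ‖a • (c - x₁)‖ + ‖t • (T - x₁)‖ := norm_add_le _ _
    _ = a * ‖c - x₁‖ + t * ‖T - x₁‖ := by
        rw [norm_smul, norm_smul, Real.norm_eq_abs, Real.norm_eq_abs,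
          abs_of_nonneg ha0, abs_of_nonneg ht0]
    _ ≤ a * r + t * r := by
        have h1 : ‖c - x₁‖ = r := by rw [norm_sub_rev]; exact hu
        rw [h1]
        have := mul_le_mul_of_nonneg_left hTx ht0
        linarith
    _ ≤ r := by nlinarith

/-- The extended linear cap of a circular arc spanning at most a quarter circle is
covered by the two disks of radius `r₁` centered at the arc endpoints.  Here `c` is
the center of the circle, `x₁ x₂` the endpoints of the arc (central angle at most
`π/2`, expressed by nonnegativity of the inner product), and `T` is the intersection
point of the two tangent lines at `x₁` and `x₂`; the extended linear cap is the
quadrilateral `conv{c, x₁, T, x₂}`. -/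
theorem stmt_14 (r₁ : ℝ) (hr : 0 < r₁) (c x₁ x₂ T : Pl)
    (h1 : dist x₁ c = r₁) (h2 : dist x₂ c = r₁) (hne : x₁ ≠ x₂)
    (hangle : 0 ≤ (inner ℝ (x₁ - c) (x₂ - c) : ℝ))
    (hT1 : (inner ℝ (T - c) (x₁ - c) : ℝ) = r₁ ^ 2)
    (hT2 : (inner ℝ (T - c) (x₂ - c) : ℝ) = r₁ ^ 2) :
    convexHull ℝ {c, x₁, T, x₂} ⊆ Metric.closedBall x₁ r₁ ∪ Metric.closedBall x₂ r₁ := by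
  have hu : ‖x₁ - c‖ = r₁ := by rw [← dist_eq_norm]; exact h1
  have hv : ‖x₂ - c‖ = r₁ := by rw [← dist_eq_norm]; exact h2
  set g : ℝ := (inner ℝ (x₁ - c) (x₂ - c) : ℝ) with hgdef
  have hr2 : (0:ℝ) < r₁ ^ 2 := by positivity
  have hgle : g ≤ r₁ ^ 2 := by
    have h := real_inner_le_norm (x₁ - c) (x₂ - c)
    rw [hu, hv] at h
    nlinarith
  have hglt : g < r₁ ^ 2 := by
    rcases lt_or_eq_of_le hgle with h | h
    · exact h
    · exfalso
      have heq : (inner ℝ (x₁ - c) (x₂ - c) : ℝ) = ‖x₁ - c‖ * ‖x₂ - c‖ := by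
        rw [hu, hv, ← hgdef, h]; ring
      have h' := inner_eq_norm_mul_iff_real.1 heq
      rw [hu, hv] at h'
      have h12 : x₁ - c = x₂ - c := smul_right_injective Pl (ne_of_gt hr) h'
      exact hne (by have := sub_left_injective h12; exact this)
  have hs : (0:ℝ) < r₁ ^ 2 + g := by linarith
  set L : ℝ := r₁ ^ 2 / (r₁ ^ 2 + g) with hLdef
  have hL : L * (r₁ ^ 2 + g) = r₁ ^ 2 := by
    rw [hLdef]; field_simp
  -- linear independence of the radii
  have hli : LinearIndependent ℝ ![x₁ - c, x₂ - c] := by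
    rw [LinearIndependent.pair_iff]
    intro s t hst
    have e1 : s * r₁ ^ 2 + t * g = 0 := by
      have h := congrArg (fun z : Pl => (inner ℝ z (x₁ - c) : ℝ)) hst
      simp only [inner_add_left, real_inner_smul_left, inner_zero_left,
        real_inner_self_eq_norm_sq, hu] at h
      rw [real_inner_comm (x₁ - c) (x₂ - c), ← hgdef] at h
      linarith [h]
    have e2 : s * g + t * r₁ ^ 2 = 0 := by
      have h := congrArg (fun z : Pl => (inner ℝ z (x₂ - c) : ℝ)) hst
      simp only [inner_add_left, real_inner_smul_left, inner_zero_left,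
        real_inner_self_eq_norm_sq, hv] at h
      rw [← hgdef] at h
      linarith [h]
    have hg4 : (0:ℝ) < r₁ ^ 2 * r₁ ^ 2 - g * g := by nlinarith
    have hs0 : s * (r₁ ^ 2 * r₁ ^ 2 - g * g) = 0 := by
      linear_combination r₁ ^ 2 * e1 - g * e2
    have hs' : s = 0 := by
      rcases mul_eq_zero.1 hs0 with h | h
      · exact h
      · exact absurd h (ne_of_gt hg4)
    refine ⟨hs', ?_⟩
    rw [hs'] at e2
    have : t * r₁ ^ 2 = 0 := by linarith
    rcases mul_eq_zero.1 this with h | h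
    · exact h
    · exact absurd h (ne_of_gt hr2)
  have hspan : Submodule.span ℝ (Set.range ![x₁ - c, x₂ - c]) = ⊤ :=
    hli.span_eq_top_of_card_eq_finrank (by simp [finrank_euclideanSpace])
  have hrange : Set.range ![x₁ - c, x₂ - c] = {x₁ - c, x₂ - c} := by
    simp [Matrix.range_cons, Matrix.range_empty, Set.pair_comm]
  -- the tangent intersection point
  have hw : T - c = L • ((x₁ - c) + (x₂ - c)) := by
    set z : Pl := (T - c) - L • ((x₁ - c) + (x₂ - c)) with hzdef
    have hz1 : (inner ℝ z (x₁ - c) : ℝ) = 0 := by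
      rw [hzdef, inner_sub_left, real_inner_smul_left, inner_add_left,
        real_inner_self_eq_norm_sq, hu, real_inner_comm (x₁ - c) (x₂ - c), ← hgdef, hT1]
      linarith [hL]
    have hz2 : (inner ℝ z (x₂ - c) : ℝ) = 0 := by
      rw [hzdef, inner_sub_left, real_inner_smul_left, inner_add_left,
        real_inner_self_eq_norm_sq, hv, ← hgdef, hT2]
      linarith [hL]
    have hzmem : z ∈ Submodule.span ℝ ({x₁ - c, x₂ - c} : Set Pl) := by
      rw [← hrange, hspan]; trivial
    obtain ⟨s, t, hst⟩ := Submodule.mem_span_pair.1 hzmem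
    have hzz : (inner ℝ z z : ℝ) = 0 := by
      have h := congrArg (fun y : Pl => (inner ℝ y z : ℝ)) hst
      simp only [inner_add_left, real_inner_smul_left] at h
      rw [real_inner_comm z (x₁ - c), real_inner_comm z (x₂ - c), hz1, hz2] at h
      rw [← h]
      ring
    have hz0 : z = 0 := inner_self_eq_zero.1 hzz
    rw [hzdef] at hz0
    exact sub_eq_zero.1 hz0
  -- decompose a point of the hull
  intro p hp
  rw [show ({c, x₁, T, x₂} : Set Pl) = insert c {x₁, T, x₂} from rfl,
    convexHull_insert ⟨x₁, by simp⟩, mem_convexJoin] at hp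
  obtain ⟨c', hc', q, hq, hseg⟩ := hp
  rw [Set.mem_singleton_iff] at hc'
  rw [show ({x₁, T, x₂} : Set Pl) = insert x₁ {T, x₂} from rfl,
    convexHull_insert ⟨T, by simp⟩, mem_convexJoin] at hq
  obtain ⟨x₁', hx₁', q₂, hq₂, hseg₂⟩ := hq
  rw [Set.mem_singleton_iff] at hx₁'
  rw [convexHull_pair] at hq₂
  obtain ⟨a₁, b₁, ha₁, hb₁, hab₁, hp1⟩ := hseg
  obtain ⟨a₂, b₂, ha₂, hb₂, hab₂, hp2⟩ := hseg₂
  obtain ⟨a₃, b₃, ha₃, hb₃, hab₃, hp3⟩ := hq₂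
  rw [hc'] at hp1
  rw [hx₁'] at hp2
  have hsum : a₁ + b₁ * a₂ + b₁ * b₂ * a₃ + b₁ * b₂ * b₃ = 1 := by
    linear_combination hab₁ + b₁ * hab₂ + b₁ * b₂ * hab₃
  have hpe : p = a₁ • c + (b₁ * a₂) • x₁ + (b₁ * b₂ * a₃) • T + (b₁ * b₂ * b₃) • x₂ := by
    rw [← hp1, ← hp2, ← hp3]
    module
  rcases le_total (b₁ * b₂ * b₃) (b₁ * a₂) with hcase | hcase
  · left
    rw [Metric.mem_closedBall]
    exact key_lemma r₁ g L hr hangle hglt hL c x₁ x₂ T p hu hv rfl hw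
      a₁ (b₁ * a₂) (b₁ * b₂ * a₃) (b₁ * b₂ * b₃) ha₁ (mul_nonneg hb₁ ha₂)
      (mul_nonneg (mul_nonneg hb₁ hb₂) ha₃) (mul_nonneg (mul_nonneg hb₁ hb₂) hb₃)
      hsum hcase hpe
  · right
    rw [Metric.mem_closedBall]
    refine key_lemma r₁ g L hr ?_ hglt hL c x₂ x₁ T p hv hu ?_ ?_
      a₁ (b₁ * b₂ * b₃) (b₁ * b₂ * a₃) (b₁ * a₂) ha₁
      (mul_nonneg (mul_nonneg hb₁ hb₂) hb₃) (mul_nonneg (mul_nonneg hb₁ hb₂) ha₃)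
      (mul_nonneg hb₁ ha₂) (by linarith) hcase ?_
    · exact hangle
    · rw [real_inner_comm (x₁ - c) (x₂ - c)]
    · rw [hw]; module
    · rw [hpe]; module
end

section
/- Let b > 0 and, for t ∈ ℝ, let Q_t := (b(1−t²)/(1+t²), 2bt/(1+t²)), a point on the circle of radius b centered at the origin. For a positive integer z, set P_i := Q_{i/z} for i = 0,…,z. Then the chord lengths |P_{i−1}P_i| are strictly decreasing in i, and each chord has length less than 2b/z. -/
/-- Rational points `Q_t` on the circle of radius `b`, modelled in the Euclidean
plane `ℂ`. -/
noncomputable def Qpt (b t : ℝ) : ℂ :=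
  ⟨b * (1 - t ^ 2) / (1 + t ^ 2), b * (2 * t) / (1 + t ^ 2)⟩

lemma Qpt_dist (b s t : ℝ) :
    dist (Qpt b s) (Qpt b t) =
      Real.sqrt ((2 * b * (s - t)) ^ 2 / ((1 + s ^ 2) * (1 + t ^ 2))) := by
  rw [Complex.dist_eq_re_im]
  congr 1
  have hs : (1 : ℝ) + s ^ 2 ≠ 0 := by positivity
  have ht : (1 : ℝ) + t ^ 2 ≠ 0 := by positivity
  show (b * (1 - s ^ 2) / (1 + s ^ 2) - b * (1 - t ^ 2) / (1 + t ^ 2)) ^ 2 +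
      (b * (2 * s) / (1 + s ^ 2) - b * (2 * t) / (1 + t ^ 2)) ^ 2 = _
  field_simp
  ring

/-- The chord lengths `|P_{i-1} P_i|` for `P_i := Q_{i/z}` are strictly decreasing
in `i`, and every chord is shorter than `2 b / z`. -/
theorem stmt_15 (b : ℝ) (hb : 0 < b) (z : ℕ) (hz : 0 < z) :
    (∀ i : ℕ, i + 2 ≤ z →
      dist (Qpt b ((i + 1 : ℕ) / z)) (Qpt b ((i + 2 : ℕ) / z)) <
        dist (Qpt b ((i : ℕ) / z)) (Qpt b ((i + 1 : ℕ) / z))) ∧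
    (∀ i : ℕ, i < z →
      dist (Qpt b ((i : ℕ) / z)) (Qpt b ((i + 1 : ℕ) / z)) < 2 * b / z) := by
  have hz' : (0 : ℝ) < z := by exact_mod_cast hz
  have hz0 : (z : ℝ) ≠ 0 := ne_of_gt hz'
  have key : ∀ i : ℕ, dist (Qpt b ((i : ℕ) / z)) (Qpt b ((i + 1 : ℕ) / z)) =
      Real.sqrt ((2 * b / z) ^ 2 /
        ((1 + ((i : ℝ) / z) ^ 2) * (1 + (((i : ℝ) + 1) / z) ^ 2))) := by
    intro i
    rw [Qpt_dist]
    push_cast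
    congr 2
    field_simp
    ring
  have hN : (0 : ℝ) < (2 * b / z) ^ 2 := by positivity
  constructor
  · intro i hi
    rw [key, key]
    apply Real.sqrt_lt_sqrt (by positivity)
    push_cast
    apply div_lt_div_of_pos_left hN (by positivity)
    have h1 : (0 : ℝ) < 1 + (((i : ℝ) + 1) / z) ^ 2 := by positivity
    have h2 : ((i : ℝ) / z) ^ 2 < (((i : ℝ) + 1 + 1) / z) ^ 2 := by
      apply pow_lt_pow_left₀ _ (by positivity)
      · norm_num
      · apply div_lt_div_of_pos_right _ hz'
        linarith
    nlinarith
  · intro i hi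
    rw [key]
    rw [Real.sqrt_lt' (by positivity)]
    apply div_lt_self hN
    have h1 : (0 : ℝ) < (((i : ℝ) + 1) / z) ^ 2 := by positivity
    have h2 : (0 : ℝ) ≤ ((i : ℝ) / z) ^ 2 := by positivity
    nlinarith
end

section
/- Monotone containment of solutions: if P ⊆ P' ⊆ Π where Π := inset(offset(Q,ε), r), and H(offset(P,r), Q) ≤ ε, then H(offset(P',r), Q) ≤ ε. -/
open Pointwise

theorem stmt_19 (Q : Set Pl) (hQ : IsCompact Q) (hQne : Q.Nonempty)
    (r ε : ℝ) (hr : 0 < r) (hε : 0 < ε)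
    (P P' : Set Pl) (hP : IsCompact P) (hPne : P.Nonempty)
    (hP' : IsCompact P') (hP'ne : P'.Nonempty)
    (h1 : P ⊆ P') (h2 : P' ⊆ inset (offset Q ε) r)
    (h : Metric.hausdorffDist (offset P r) Q ≤ ε) :
    Metric.hausdorffDist (offset P' r) Q ≤ ε := by
  have hsub : offset P r ⊆ offset P' r := Set.add_subset_add_right h1
  have hPrne : (offset P r).Nonempty := by
    obtain ⟨p, hp⟩ := hPne
    exact ⟨p + 0, Set.add_mem_add hp (Metric.mem_closedBall_self hr.le)⟩
  have hbddP : Bornology.IsBounded (offset P r) :=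
    (hP.isBounded.add (Metric.isBounded_closedBall))
  have hedist : EMetric.hausdorffEdist (offset P r) Q ≠ ⊤ :=
    Metric.hausdorffEdist_ne_top_of_nonempty_of_bounded hPrne hQne hbddP hQ.isBounded
  apply Metric.hausdorffDist_le_of_infDist hε.le
  · rintro x ⟨p, hp, b, hb, rfl⟩
    have hx : p + b ∈ offset Q ε := by
      apply h2 hp
      simp only [Metric.mem_closedBall] at hb ⊢
      simpa [dist_eq_norm] using hb
    obtain ⟨q, hq, c, hc, hqc⟩ := hx
    calc Metric.infDist (p + b) Q ≤ dist (p + b) q := Metric.infDist_le_dist_of_mem hq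
      _ ≤ ε := by
          rw [← hqc]
          simpa [dist_eq_norm] using Metric.mem_closedBall.mp hc
  · intro y hy
    calc Metric.infDist y (offset P' r) ≤ Metric.infDist y (offset P r) :=
          Metric.infDist_le_infDist_of_subset hsub hPrne
      _ ≤ Metric.hausdorffDist (offset P r) Q := by
          rw [Metric.hausdorffDist_comm]
          exact Metric.infDist_le_hausdorffDist_of_mem hy (by rw [EMetric.hausdorffEdist_comm]; exact hedist)
      _ ≤ ε := h
end
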